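/- arXiv:0912.2340 — 2 statements merged into one kernel-verified Lean document; each statement's English description precedes it below -/
import Mathlib

section
/- Let h = ⊕ⱼ h_j ∈ H²⊗ℓ² and let g ∈ H² be an outer function with |g|² = ∑ⱼ |h_j|² a.e. on 𝕋. Let A be a unital subalgebra of H^∞. Then for every column multiplier F = (f_i)ᵢ with entries in A, ‖(M_F ⊗ I)h‖ = ‖M_F g‖, i.e., the map U : [(C(A)⊗I)h] → [C(A)g] sending (M_F⊗I)h to M_F g is a well-defined surjective isometry. -/
/-! For a bounded multiplier `φ`, the a.e. identity `|g|² = ∑ⱼ |h_j|²` gives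
`∫ |φ g|² = ∑ⱼ ∫ |φ h_j|²`, the interchange of sum and integral being justified by the bound
`∫ |φ h_j|² ≤ (sup |φ|)² ‖h_j‖²`. Applied to each entry `f_i` of the column, this says that the
double series of nonnegative terms `∫ |f_i h_j|²` has row sums `∫ |f_i g|²`; these are summable,
so the order of summation may be exchanged. -/

open MeasureTheory
open scoped Real ENNReal

noncomputable section

instance : Fact (0 < 2 * π) := ⟨by positivity⟩

abbrev Circle2 : Type := AddCircle (2 * π)

abbrev μT : Measure Circle2 := AddCircle.haarAddCircle

/-- Membership in the Hardy space `H²`: the negative Fourier coefficients vanish. -/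
def InH2 (f : Lp ℂ 2 μT) : Prop := ∀ n : ℤ, n < 0 → fourierCoeff (⇑f) n = 0

/-- `g ∈ H²` is outer. -/
def IsOuter (g : Lp ℂ 2 μT) : Prop :=
  fourierCoeff (⇑g) 0 ≠ 0 ∧
    Real.log (‖fourierCoeff (⇑g) 0‖)
      = ∫ t, Real.log (‖g t‖) ∂μT

theorem tsum_tsum_comm_of_hasSum_of_nonneg {β γ : Type*} {a : β → γ → ℝ} {b : β → ℝ}
    (ha : ∀ i j, 0 ≤ a i j) (hrow : ∀ i, HasSum (a i) (b i)) (hb : Summable b) :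
    ∑' j, ∑' i, a i j = ∑' i, b i := by
  have hs : Summable (Function.uncurry a) := by
    refine (summable_prod_of_nonneg fun p => ha p.1 p.2).2 ⟨fun i => (hrow i).summable, ?_⟩
    simpa only [Function.uncurry_apply_pair, (hrow _).tsum_eq] using hb
  rw [hs.tsum_comm]
  exact tsum_congr fun i => (hrow i).tsum_eq

namespace MeasureTheory

variable {α : Type*} [MeasurableSpace α] {μ : Measure α}

theorem Lp.integral_norm_sq {E : Type*} [NormedAddCommGroup E] (q : Lp E 2 μ) :
    ∫ t, ‖q t‖ ^ 2 ∂μ = ‖q‖ ^ 2 := by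
  rw [Lp.norm_def, toReal_eLpNorm (Lp.aestronglyMeasurable q),
    lpNorm_eq_integral_norm_rpow_toReal two_ne_zero ENNReal.ofNat_ne_top
      (Lp.aestronglyMeasurable q), ← Real.rpow_natCast, ← Real.rpow_mul (integral_nonneg fun _ => by positivity)]
  norm_num

variable {𝕜 : Type*} [NormedField 𝕜] {φ : α → 𝕜} {C : ℝ}

theorem integrable_norm_mul_sq (hφ : AEStronglyMeasurable φ μ) (hC : ∀ t, ‖φ t‖ ≤ C)
    (q : Lp 𝕜 2 μ) : Integrable (fun t => ‖φ t * q t‖ ^ 2) μ := by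
  refine Integrable.mono' (((Lp.memLp q).integrable_norm_pow two_ne_zero).const_mul (C ^ 2))
    ((hφ.mul (Lp.aestronglyMeasurable q)).norm.pow 2) (ae_of_all _ fun t => ?_)
  rw [Real.norm_of_nonneg (by positivity), norm_mul, mul_pow]
  gcongr
  exact hC t

theorem integral_norm_mul_sq_le (hφ : AEStronglyMeasurable φ μ) (hC : ∀ t, ‖φ t‖ ≤ C)
    (q : Lp 𝕜 2 μ) : ∫ t, ‖φ t * q t‖ ^ 2 ∂μ ≤ C ^ 2 * ‖q‖ ^ 2 := by
  rw [← Lp.integral_norm_sq, ← integral_const_mul]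
  refine integral_mono (integrable_norm_mul_sq hφ hC q)
    (((Lp.memLp q).integrable_norm_pow two_ne_zero).const_mul _) fun t => ?_
  rw [norm_mul, mul_pow]
  gcongr
  exact hC t

theorem hasSum_integral_norm_mul_sq {ι : Type*} [Countable ι] (hφ : AEStronglyMeasurable φ μ)
    (hC : ∀ t, ‖φ t‖ ≤ C) {h : ι → Lp 𝕜 2 μ} (hsum : Summable fun j => ‖h j‖ ^ 2)
    {g : α → 𝕜} (hg : ∀ᵐ t ∂μ, ‖g t‖ ^ 2 = ∑' j, ‖h j t‖ ^ 2) :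
    HasSum (fun j => ∫ t, ‖φ t * h j t‖ ^ 2 ∂μ) (∫ t, ‖φ t * g t‖ ^ 2 ∂μ) := by
  have hpointwise : ∀ᵐ t ∂μ, ∑' j, ‖φ t * h j t‖ ^ 2 = ‖φ t * g t‖ ^ 2 := by
    filter_upwards [hg] with t ht
    simp only [norm_mul, mul_pow, tsum_mul_left, ht]
  have hsummable : Summable fun j => ∫ t, ‖‖φ t * h j t‖ ^ 2‖ ∂μ := by
    refine (hsum.mul_left (C ^ 2)).of_nonneg_of_le
      (fun j => integral_nonneg fun _ => by positivity) fun j => ?_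
    simpa only [norm_pow, norm_norm] using integral_norm_mul_sq_le hφ hC (h j)
  rw [← integral_congr_ae hpointwise]
  exact hasSum_integral_of_summable_integral_norm (fun j => integrable_norm_mul_sq hφ hC (h j))
    hsummable

end MeasureTheory

theorem stmt_9_general (A : Set (Circle2 → ℂ))
    (hAHinf : ∀ f ∈ A, Measurable f ∧ (∃ C, ∀ t, ‖f t‖ ≤ C) ∧
      ∀ n : ℤ, n < 0 → fourierCoeff f n = 0)
    (h : ℕ → Lp ℂ 2 μT) (hsum : Summable fun j => ‖h j‖ ^ 2)
    (g : Lp ℂ 2 μT) (hg2 : InH2 g)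
    (hpg : ∀ᵐ t ∂μT, ‖g t‖ ^ 2 = ∑' j, ‖h j t‖ ^ 2)
    (f : ℕ → Circle2 → ℂ) (hf : ∀ i, f i ∈ A)
    (hmult : ∀ q : Lp ℂ 2 μT, InH2 q →
      Summable fun i => ∫ t, ‖f i t * q t‖ ^ 2 ∂μT) :
    ∑' j, ∑' i, ∫ t, ‖f i t * h j t‖ ^ 2 ∂μT
      = ∑' i, ∫ t, ‖f i t * g t‖ ^ 2 ∂μT := by
  have hrow (i : ℕ) : HasSum (fun j => ∫ t, ‖f i t * h j t‖ ^ 2 ∂μT)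
      (∫ t, ‖f i t * g t‖ ^ 2 ∂μT) := by
    obtain ⟨hmeas, ⟨C, hC⟩, -⟩ := hAHinf (f i) (hf i)
    exact hasSum_integral_norm_mul_sq hmeas.aestronglyMeasurable hC hsum hpg
  exact tsum_tsum_comm_of_hasSum_of_nonneg (fun _ _ => integral_nonneg fun _ => by positivity)
    hrow (hmult g hg2)

/-- Let `h = ⊕ h_j ∈ H² ⊗ ℓ²` and let `g` be an outer function with `|g|² = ∑_j |h_j|²` a.e.
For every column multiplier `F = (f_i)` with entries in a unital subalgebra `A` of `H^∞`,
`‖(M_F ⊗ I) h‖ = ‖M_F g‖`, i.e. the map `U : (M_F ⊗ I) h ↦ M_F g` is a well-defined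
surjective isometry from `[(C(A) ⊗ I) h]` onto `[C(A) g]`. -/
theorem stmt_9 (A : Set (Circle2 → ℂ))
    (hA1 : (fun _ => (1 : ℂ)) ∈ A)
    (hAadd : ∀ f ∈ A, ∀ g ∈ A, f + g ∈ A)
    (hAmul : ∀ f ∈ A, ∀ g ∈ A, f * g ∈ A)
    (hAsmul : ∀ (c : ℂ), ∀ f ∈ A, c • f ∈ A)
    (hAHinf : ∀ f ∈ A, Measurable f ∧ (∃ C, ∀ t, ‖f t‖ ≤ C) ∧
      ∀ n : ℤ, n < 0 → fourierCoeff f n = 0)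
    (h : ℕ → Lp ℂ 2 μT) (hh : ∀ j, InH2 (h j)) (hsum : Summable fun j => ‖h j‖ ^ 2)
    (g : Lp ℂ 2 μT) (hg2 : InH2 g) (hgo : IsOuter g)
    (hpg : ∀ᵐ t ∂μT, ‖g t‖ ^ 2 = ∑' j, ‖h j t‖ ^ 2)
    (f : ℕ → Circle2 → ℂ) (hf : ∀ i, f i ∈ A)
    (hmult : ∀ q : Lp ℂ 2 μT, InH2 q →
      Summable fun i => ∫ t, ‖f i t * q t‖ ^ 2 ∂μT) :
    ∑' j, ∑' i, ∫ t, ‖f i t * h j t‖ ^ 2 ∂μT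
      = ∑' i, ∫ t, ‖f i t * g t‖ ^ 2 ∂μT :=
  stmt_9_general A hAHinf h hsum g hg2 hpg f hf hmult

end
end

section
/- Let K₁, K₂ be kernels on X, let x₁,…,xₙ ∈ X, v₁,…,vₙ ∈ ℓ², w₁,…,wₙ ∈ ℂ, and suppose there exist invertible maps on the relevant finite-dimensional spans intertwining the kernels via a multiplier φ with c = ‖M_φ‖‖M_φ⁻¹‖ < ∞, i.e., S* k_x^{K₂} = conj(φ(x)) k_x^{K₁} with S = M_φ invertible. If [(α²⟨v_j,v_i⟩ − w_i conj(w_j)) K₁(x_i,x_j)] ≥ 0, then [(c²α²⟨v_j,v_i⟩ − w_i conj(w_j)) K₂(x_i,x_j)] ≥ 0. -/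
open scoped ENNReal ComplexOrder

local notation "⟪" x ", " y "⟫" => @inner ℂ _ _ x y

/-!
Write `V = Gram(v)`, `W = [w_i conj w_j]`, `G_u = Gram(u)` and `P_β(u) = (β² V − W) ∘ G_u`
(Schur product) for the tangential Pick matrix of kernel vectors `u`. Rescaling the `u_i` by
scalars `c_i` multiplies `P_β(u)` entrywise by the rank-one positive matrix `[conj c_i c_j]`, so
`P_α(k₁ ∘ x) ≥ 0` gives `P_α(S* k₂ ∘ x) ≥ 0`. To return from `T u` to `u` when `L T = id` (here
`T = S*`, `L = (S⁻¹)*`), split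
`P_{‖T‖‖L‖β}(u) = β²‖L‖² V ∘ (‖T‖² G_u − G_{Tu}) + ‖L‖² P_β(Tu) + W ∘ (‖L‖² G_{Tu} − G_{LTu})`;
each summand is positive by the Schur product theorem and `‖A y‖ ≤ ‖A‖ ‖y‖` on Gram matrices.
-/

open Matrix

section TangentialPick

variable {ι E H K : Type*}
  [NormedAddCommGroup E] [InnerProductSpace ℂ E]
  [NormedAddCommGroup H] [InnerProductSpace ℂ H]
  [NormedAddCommGroup K] [InnerProductSpace ℂ K]

noncomputable def tangentialPickMatrix (β : ℝ) (v : ι → E) (w : ι → ℂ) (u : ι → H) :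
    Matrix ι ι ℂ :=
  ((β : ℂ) ^ 2 • gram ℂ v - vecMulVec w (star w)) ⊙ gram ℂ u

lemma tangentialPickMatrix_eq_of (β : ℝ) (v : ι → E) (w : ι → ℂ) (u : ι → H) :
    tangentialPickMatrix β v w u = of fun i j =>
      ((β : ℂ) ^ 2 * ⟪v i, v j⟫ - w i * starRingEnd ℂ (w j)) * ⟪u i, u j⟫ := rfl

lemma Matrix.PosSemidef.tangentialPickMatrix_smul [Finite ι] {β : ℝ} {v : ι → E} {w : ι → ℂ}
    {u : ι → H} (h : (tangentialPickMatrix β v w u).PosSemidef) (c : ι → ℂ) :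
    (tangentialPickMatrix β v w (fun i => c i • u i)).PosSemidef := by
  have hgram : gram ℂ (fun i => c i • u i) = vecMulVec (star c) c ⊙ gram ℂ u := by
    ext i j
    simp only [gram_apply, hadamard_apply, vecMulVec_apply, inner_smul_left, inner_smul_right,
      Pi.star_apply, RCLike.star_def]
    ring
  have key : tangentialPickMatrix β v w (fun i => c i • u i)
      = vecMulVec (star c) c ⊙ tangentialPickMatrix β v w u := by
    rw [tangentialPickMatrix, tangentialPickMatrix, hgram, ← hadamard_assoc,
      hadamard_comm _ (vecMulVec _ _), hadamard_assoc]
  rw [key]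
  exact (posSemidef_vecMulVec_star_self c).hadamard h

lemma Matrix.PosSemidef.tangentialPickMatrix_of_leftInverse [Finite ι] {β : ℝ} {v : ι → E}
    {w : ι → ℂ} {u : ι → H} (T : H →L[ℂ] K) (L : K →L[ℂ] H) (hLT : ∀ i, L (T (u i)) = u i)
    (h : (tangentialPickMatrix β v w (T ∘ u)).PosSemidef) :
    (tangentialPickMatrix (‖T‖ * ‖L‖ * β) v w u).PosSemidef := by
  have hu : gram ℂ u = gram ℂ (L ∘ T ∘ u) := by
    congr 1; funext i; exact (hLT i).symm
  have key : tangentialPickMatrix (‖T‖ * ‖L‖ * β) v w u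
      = ((β * ‖L‖) ^ 2 : ℝ) • (gram ℂ v ⊙ (‖T‖ ^ 2 • gram ℂ u - gram ℂ (T ∘ u)))
        + (‖L‖ ^ 2 : ℝ) • tangentialPickMatrix β v w (T ∘ u)
        + vecMulVec w (star w) ⊙ (‖L‖ ^ 2 • gram ℂ (T ∘ u) - gram ℂ (L ∘ T ∘ u)) := by
    rw [← hu]
    ext i j
    simp only [tangentialPickMatrix, Matrix.add_apply, Matrix.sub_apply, Matrix.smul_apply,
      hadamard_apply, Complex.real_smul]
    push_cast
    ring
  rw [key]
  exact (((posSemidef_gram ℂ v).hadamard (posSemidef_opNorm_smul_gram_sub_gram u T)).smul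
    (by positivity)).add (h.smul (by positivity)) |>.add
    ((posSemidef_vecMulVec_self_star w).hadamard (posSemidef_opNorm_smul_gram_sub_gram _ L))

end TangentialPick

/-- Transport of the tangential matrix positivity condition between two kernels `K₁, K₂` on `X`
under a similarity `S = M_φ` with `S* k_x^{K₂} = conj (φ x) • k_x^{K₁}`, at the cost of the
constant `c = ‖S‖ ‖S⁻¹‖`:  if `[(α² ⟨v_j,v_i⟩ − w_i conj w_j) K₁(x_i,x_j)] ≥ 0` then
`[(c² α² ⟨v_j,v_i⟩ − w_i conj w_j) K₂(x_i,x_j)] ≥ 0`. -/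
theorem stmt_18 {X H₁ H₂ : Type*}
    [NormedAddCommGroup H₁] [InnerProductSpace ℂ H₁] [CompleteSpace H₁]
    [NormedAddCommGroup H₂] [InnerProductSpace ℂ H₂] [CompleteSpace H₂]
    (k1 : X → H₁) (k2 : X → H₂) (φ : X → ℂ) (S : H₁ ≃L[ℂ] H₂)
    (hS : ∀ x, ContinuousLinearMap.adjoint (S : H₁ →L[ℂ] H₂) (k2 x)
        = (starRingEnd ℂ) (φ x) • k1 x)
    (α : ℝ) (n : ℕ) (x : Fin n → X)
    (v : Fin n → lp (fun _ : ℕ => ℂ) 2) (w : Fin n → ℂ)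
    (hpos : Matrix.PosSemidef (Matrix.of fun i j : Fin n =>
      ((α : ℂ) ^ 2 * ⟪v i, v j⟫ - w i * (starRingEnd ℂ) (w j)) * ⟪k1 (x i), k1 (x j)⟫)) :
    Matrix.PosSemidef (Matrix.of fun i j : Fin n =>
      (((‖(S : H₁ →L[ℂ] H₂)‖ * ‖(S.symm : H₂ →L[ℂ] H₁)‖ : ℝ) : ℂ) ^ 2 * (α : ℂ) ^ 2
          * ⟪v i, v j⟫ - w i * (starRingEnd ℂ) (w j)) * ⟪k2 (x i), k2 (x j)⟫) := by
  open ContinuousLinearMap in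
  set T := adjoint (S : H₁ →L[ℂ] H₂)
  set L := adjoint (S.symm : H₂ →L[ℂ] H₁)
  have hLT : L ∘L T = .id ℂ H₂ := by
    rw [← adjoint_comp, ContinuousLinearEquiv.coe_comp_coe_symm, adjoint_id]
  have hTk : T ∘ k2 ∘ x = fun i => (starRingEnd ℂ) (φ (x i)) • k1 (x i) :=
    funext fun i => hS _
  have hpos₁ : (tangentialPickMatrix α v w (k1 ∘ x)).PosSemidef := by
    rwa [tangentialPickMatrix_eq_of]
  have hposT : (tangentialPickMatrix α v w (T ∘ k2 ∘ x)).PosSemidef := by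
    rw [hTk]
    exact hpos₁.tangentialPickMatrix_smul _
  have h := hposT.tangentialPickMatrix_of_leftInverse T L fun i => congr($hLT (k2 (x i)))
  rw [adjoint.norm_map, adjoint.norm_map] at h
  convert h using 1
  ext i j
  simp only [tangentialPickMatrix_eq_of, Matrix.of_apply]
  push_cast
  ring
end
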